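/- If m ≥ 3, then α(Φ(X1X2⋯Xm)) = −m·β(Φ(X1X2⋯Xm)) in Sym^m(H) for all X1, …, Xm ∈ H, where α := −β + γ. (This is the key identity from which the paper deduces that the composite of Schedler's cobracket with the symmetrization map 𝔰 recovers (−1)^m·m times the Morita trace Tr_{m+1}.) -/
import Mathlib


noncomputable section

variable {H : Type*} [AddCommGroup H] [Module ℚ H]

/-- The pure tensor `X1 ⊗ ⋯ ⊗ Xm`, as the element `ι(X1)⋯ι(Xm)` of the
tensor algebra `T(H)`. -/
def word (l : List H) : TensorAlgebra ℚ H :=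
  (l.map fun x => TensorAlgebra.ι ℚ x).prod

/-- The Dynkin map `Φ(X1 X2 ⋯ Xm) = [X1,[X2,[⋯,[X_{m−1},Xm]⋯]]]`, with
`[a,b] := ab − ba` the commutator in `T(H)` and `Φ(X1) = X1`. -/
def dynkin : List H → TensorAlgebra ℚ H
  | [] => 0
  | [x] => TensorAlgebra.ι ℚ x
  | x :: y :: l =>
      TensorAlgebra.ι ℚ x * dynkin (y :: l) - dynkin (y :: l) * TensorAlgebra.ι ℚ x

variable {A : Type*} [CommRing A] [Algebra ℚ A]

/-- The monomial `X1 X2 ⋯ Xm` in the symmetric algebra `Sym(H)`, modelled by a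
commutative `ℚ`-algebra `A` equipped with a linear map `σ : H → A`. -/
def symword (σ : H →ₗ[ℚ] A) (l : List H) : A := (l.map fun x => σ x).prod

/-- `β = β_{Y,Z} : H^{⊗m} → Sym^m(H)` (for every `m ≥ 2` simultaneously) is the
linear map determined on pure tensors by
`β(X1⋯Xm) = −(Y·X1)·Z X2⋯Xm − (Y·Xm)·Z X1⋯X_{m−1} + (Z·X1)·Y X2⋯Xm + (Z·Xm)·Y X1⋯X_{m−1}`. -/
def IsBeta (ω : H →ₗ[ℚ] H →ₗ[ℚ] ℚ) (σ : H →ₗ[ℚ] A) (Y Z : H)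
    (β : TensorAlgebra ℚ H →ₗ[ℚ] A) : Prop :=
  ∀ (x z : H) (mid : List H),
    β (word (x :: (mid ++ [z]))) =
      -((ω Y x) • (σ Z * symword σ (mid ++ [z])))
        - (ω Y z) • (σ Z * symword σ (x :: mid))
        + (ω Z x) • (σ Y * symword σ (mid ++ [z]))
        + (ω Z z) • (σ Y * symword σ (x :: mid))

/-- `γ = γ_{Y,Z} : H^{⊗m} → Sym^m(H)` (for every `m ≥ 3` simultaneously) is the
linear map determined on pure tensors by
`γ(X1⋯Xm) = −(Y·X2)·Z X1X3⋯Xm − (Y·X_{m−1})·Z X1⋯X_{m−2}Xm + (Z·X2)·Y X1X3⋯Xm + (Z·X_{m−1})·Y X1⋯X_{m−2}Xm`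
(for `m = 3` the positions `2` and `m−1` coincide, so the corresponding terms add up). -/
def IsGamma (ω : H →ₗ[ℚ] H →ₗ[ℚ] ℚ) (σ : H →ₗ[ℚ] A) (Y Z : H)
    (γ : TensorAlgebra ℚ H →ₗ[ℚ] A) : Prop :=
  (∀ a b c : H,
    γ (word [a, b, c]) =
      -((ω Y b) • (σ Z * symword σ [a, c]))
        - (ω Y b) • (σ Z * symword σ [a, c])
        + (ω Z b) • (σ Y * symword σ [a, c])
        + (ω Z b) • (σ Y * symword σ [a, c])) ∧
  (∀ (a b : H) (mid : List H) (c d : H),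
    γ (word (a :: b :: (mid ++ [c, d]))) =
      -((ω Y b) • (σ Z * symword σ (a :: (mid ++ [c, d]))))
        - (ω Y c) • (σ Z * symword σ (a :: b :: (mid ++ [d])))
        + (ω Z b) • (σ Y * symword σ (a :: (mid ++ [c, d])))
        + (ω Z c) • (σ Y * symword σ (a :: b :: (mid ++ [d]))))

-- auxiliary material
set_option linter.unusedSectionVars false

lemma word_nil : word ([] : List H) = 1 := rfl
lemma word_cons (x : H) (l : List H) : word (x :: l) = TensorAlgebra.ι ℚ x * word l := by
  simp [word]
lemma word_append (l₁ l₂ : List H) : word (l₁ ++ l₂) = word l₁ * word l₂ := by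
  simp [word]
lemma symword_cons (σ : H →ₗ[ℚ] A) (x : H) (l : List H) :
    symword σ (x :: l) = σ x * symword σ l := by simp [symword]
lemma symword_perm (σ : H →ₗ[ℚ] A) {l₁ l₂ : List H} (h : l₁.Perm l₂) :
    symword σ l₁ = symword σ l₂ := (h.map _).prod_eq

def brk (x y : H) (a : TensorAlgebra ℚ H) : TensorAlgebra ℚ H :=
  TensorAlgebra.ι ℚ x * (TensorAlgebra.ι ℚ y * a - a * TensorAlgebra.ι ℚ y)
    - (TensorAlgebra.ι ℚ y * a - a * TensorAlgebra.ι ℚ y) * TensorAlgebra.ι ℚ x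

lemma dynkin_cons_cons (x y : H) (t : List H) (ht : t ≠ []) :
    dynkin (x :: y :: t) = brk x y (dynkin t) := by
  cases t with
  | nil => exact absurd rfl ht
  | cons z l => simp [dynkin, brk]

lemma brk_word (x y : H) (w : List H) :
    brk x y (word w) =
      word (x :: y :: w) - word (x :: (w ++ [y])) - word (y :: (w ++ [x]))
        + word ((w ++ [y]) ++ [x]) := by
  simp only [brk, word_cons, word_append, word_nil]
  simp [word]
  noncomm_ring

lemma brk_add (x y : H) (a b : TensorAlgebra ℚ H) :
    brk x y (a + b) = brk x y a + brk x y b := by unfold brk; noncomm_ring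

lemma brk_smul (x y : H) (c : ℚ) (a : TensorAlgebra ℚ H) :
    brk x y (c • a) = c • brk x y a := by
  unfold brk; simp [mul_smul_comm, smul_mul_assoc, smul_sub, mul_sub, sub_mul]

def dexp : List H → List (ℚ × List H)
  | [] => []
  | [x] => [(1, [x])]
  | x :: y :: l =>
      ((dexp (y :: l)).map fun p => (p.1, x :: p.2)) ++
      ((dexp (y :: l)).map fun p => (-p.1, p.2 ++ [x]))

lemma sum_mul_left (x : H) (L : List (ℚ × List H)) :
    TensorAlgebra.ι ℚ x * (L.map fun p => p.1 • word p.2).sum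
      = (L.map fun p => p.1 • word (x :: p.2)).sum := by
  induction L with
  | nil => simp
  | cons p L ih => simp [mul_add, ih, word_cons, mul_smul_comm]

lemma word_singleton (x : H) : word [x] = TensorAlgebra.ι ℚ x := by simp [word]

lemma sum_map_neg_smul (L : List (ℚ × List H)) (f : ℚ × List H → TensorAlgebra ℚ H) :
    (L.map fun p => (-p.1) • f p).sum = -(L.map fun p => p.1 • f p).sum := by
  induction L with
  | nil => simp
  | cons p L ih => rw [List.map_cons, List.sum_cons, List.map_cons, List.sum_cons, ih, neg_smul, neg_add]

lemma sum_mul_right (x : H) (L : List (ℚ × List H)) :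
    (L.map fun p => p.1 • word p.2).sum * TensorAlgebra.ι ℚ x
      = (L.map fun p => p.1 • word (p.2 ++ [x])).sum := by
  induction L with
  | nil => simp
  | cons p L ih => simp [add_mul, ih, word_append, smul_mul_assoc, word_singleton]

lemma dexp_sum : ∀ l : List H, dynkin l = ((dexp l).map fun p => p.1 • word p.2).sum := by
  intro l
  induction l with
  | nil => simp [dynkin, dexp]
  | cons x t ih =>
    cases t with
    | nil => simp [dynkin, dexp, word]
    | cons y l =>
      show dynkin (x :: y :: l) = _
      rw [show dynkin (x :: y :: l)
          = TensorAlgebra.ι ℚ x * dynkin (y :: l) - dynkin (y :: l) * TensorAlgebra.ι ℚ x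
          from rfl, ih]
      rw [show dexp (x :: y :: l)
          = ((dexp (y :: l)).map fun p => (p.1, x :: p.2)) ++
            ((dexp (y :: l)).map fun p => (-p.1, p.2 ++ [x])) from rfl]
      rw [List.map_append, List.sum_append, List.map_map, List.map_map]
      rw [sum_mul_left, sum_mul_right, sub_eq_add_neg, ← sum_map_neg_smul]
      simp [Function.comp_def]

lemma dexp_perm : ∀ (l : List H), ∀ p ∈ dexp l, p.2.Perm l := by
  intro l
  induction l with
  | nil => simp [dexp]
  | cons x t ih =>
    cases t with
    | nil => simp [dexp]
    | cons y l =>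
      intro p hp
      rw [show dexp (x :: y :: l)
          = ((dexp (y :: l)).map fun p => (p.1, x :: p.2)) ++
            ((dexp (y :: l)).map fun p => (-p.1, p.2 ++ [x])) from rfl] at hp
      rcases List.mem_append.1 hp with h | h <;> obtain ⟨q, hq, rfl⟩ := List.mem_map.1 h
      · exact (ih q hq).cons x
      · exact (List.perm_append_singleton x q.2).trans ((ih q hq).cons x)

set_option linter.unusedSectionVars false

lemma sum_map_fst_neg (L : List (ℚ × List H)) :
    (L.map fun p => -p.1).sum = -((L.map fun p => p.1).sum) := by
  induction L with
  | nil => simp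
  | cons p L ih => rw [List.map_cons, List.sum_cons, List.map_cons, List.sum_cons, ih, neg_add]

lemma dexp_fst_sum (x y : H) (l : List H) :
    ((dexp (x :: y :: l)).map Prod.fst).sum = 0 := by
  rw [show dexp (x :: y :: l)
      = ((dexp (y :: l)).map fun p => (p.1, x :: p.2)) ++
        ((dexp (y :: l)).map fun p => (-p.1, p.2 ++ [x])) from rfl,
      List.map_append, List.sum_append, List.map_map, List.map_map]
  simp only [Function.comp_def]
  rw [sum_map_fst_neg]
  ring

lemma brk_sum (x y : H) (L : List (ℚ × List H)) :
    brk x y ((L.map fun p => p.1 • word p.2).sum)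
      = (L.map fun p => p.1 • brk x y (word p.2)).sum := by
  induction L with
  | nil => simp [brk]
  | cons p L ih =>
    rw [List.map_cons, List.sum_cons, List.map_cons, List.sum_cons, brk_add, brk_smul, ih]

lemma phi_dynkin (φ : TensorAlgebra ℚ H →ₗ[ℚ] A) (l : List H) :
    φ (dynkin l) = ((dexp l).map fun p => p.1 • φ (word p.2)).sum := by
  rw [dexp_sum l, map_list_sum, List.map_map]
  simp [Function.comp_def]

lemma split_last {w : List H} (h : 1 ≤ w.length) : ∃ mid v, w = mid ++ [v] := by
  rcases List.eq_nil_or_concat w with rfl | ⟨mid, v, rfl⟩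
  · simp at h
  · exact ⟨mid, v, by simp⟩

lemma split2 {w : List H} (h : 2 ≤ w.length) : ∃ u mid v, w = u :: (mid ++ [v]) := by
  cases w with
  | nil => simp at h
  | cons u rest =>
    have : 1 ≤ rest.length := by simp at h; omega
    obtain ⟨mid, v, rfl⟩ := split_last this
    exact ⟨u, mid, v, rfl⟩

lemma split4 {w : List H} (h : 4 ≤ w.length) :
    ∃ u v mid p q, w = u :: v :: (mid ++ [p, q]) := by
  cases w with
  | nil => simp at h
  | cons u rest =>
    cases rest with
    | nil => simp at h
    | cons v rest2 =>
      have h2 : 2 ≤ rest2.length := by simp at h; omega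
      obtain ⟨mid', q, rfl⟩ := split_last (w := rest2) (by omega)
      have h1 : 1 ≤ mid'.length := by simp at h2; omega
      obtain ⟨mid, p, rfl⟩ := split_last h1
      exact ⟨u, v, mid, p, q, by simp⟩

lemma split3 {w : List H} (h : w.length = 3) : ∃ a b c, w = [a, b, c] := by
  match w, h with
  | [a, b, c], _ => exact ⟨a, b, c, rfl⟩

section withmaps
variable (ω : H →ₗ[ℚ] H →ₗ[ℚ] ℚ) (σ : H →ₗ[ℚ] A) (Y Z : H)

lemma beta_brk {β : TensorAlgebra ℚ H →ₗ[ℚ] A} (hβ : IsBeta ω σ Y Z β)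
    (x y : H) {w : List H} (hw : 2 ≤ w.length) :
    β (brk x y (word w)) =
      (σ x * σ y) * β (word w)
        + (2 * ω Y y) • (σ x * (σ Z * symword σ w))
        - (2 * ω Z y) • (σ x * (σ Y * symword σ w)) := by
  obtain ⟨u, mid, v, rfl⟩ := split2 hw
  have h1 := hβ x v (y :: u :: mid)
  have h2 := hβ x y (u :: (mid ++ [v]))
  have h3 := hβ y x (u :: (mid ++ [v]))
  have h4 := hβ u x (mid ++ [v, y])
  have h0 := hβ u v mid
  rw [brk_word, map_add, map_sub, map_sub]
  simp only [List.cons_append, List.nil_append, List.append_assoc,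
    List.singleton_append] at h1 h2 h3 h4 h0 ⊢
  rw [h1, h2, h3, h4, h0]
  simp only [symword, List.map_append, List.prod_append, List.map_cons, List.prod_cons,
    List.map_nil, List.prod_nil, mul_one, Algebra.smul_def, map_mul, map_neg, map_ofNat,
    map_one, map_sub, map_add]
  ring

end withmaps

section withmaps2
variable (ω : H →ₗ[ℚ] H →ₗ[ℚ] ℚ) (σ : H →ₗ[ℚ] A) (Y Z : H)

lemma gamma_brk {β γ : TensorAlgebra ℚ H →ₗ[ℚ] A} (hβ : IsBeta ω σ Y Z β)
    (hγ : IsGamma ω σ Y Z γ) (x y : H) {w : List H} (hw : 3 ≤ w.length) :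
    γ (brk x y (word w)) =
      (σ x * σ y) * γ (word w)
        - (2:ℚ) • ((σ x * σ y) * β (word w))
        - (2 * ω Y y) • (σ x * (σ Z * symword σ w))
        + (2 * ω Z y) • (σ x * (σ Y * symword σ w)) := by
  rcases eq_or_lt_of_le hw with h3 | h4
  · obtain ⟨a, b, c, rfl⟩ := split3 h3.symm
    have g1 := hγ.2 x y [a] b c
    have g2 := hγ.2 x a [b] c y
    have g3 := hγ.2 y a [b] c x
    have g4 := hγ.2 a b [c] y x
    have g0 := hγ.1 a b c
    have b0 := hβ a c [b]
    rw [brk_word, map_add, map_sub, map_sub]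
    simp only [List.cons_append, List.nil_append, List.append_assoc,
      List.singleton_append] at g1 g2 g3 g4 g0 b0 ⊢
    rw [g1, g2, g3, g4, g0, b0]
    simp only [symword, List.map_append, List.prod_append, List.map_cons, List.prod_cons,
      List.map_nil, List.prod_nil, mul_one, Algebra.smul_def, map_mul, map_neg, map_ofNat,
      map_one, map_sub, map_add]
    ring
  · obtain ⟨u, v, mid, p, q, rfl⟩ := split4 (w := w) (by omega)
    have g1 := hγ.2 x y (u :: v :: mid) p q
    have g2 := hγ.2 x u (v :: (mid ++ [p])) q y
    have g3 := hγ.2 y u (v :: (mid ++ [p])) q x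
    have g4 := hγ.2 u v (mid ++ [p, q]) y x
    have g0 := hγ.2 u v mid p q
    have b0 := hβ u q (v :: (mid ++ [p]))
    rw [brk_word, map_add, map_sub, map_sub]
    simp only [List.cons_append, List.nil_append, List.append_assoc,
      List.singleton_append] at g1 g2 g3 g4 g0 b0 ⊢
    rw [g1, g2, g3, g4, g0, b0]
    simp only [symword, List.map_append, List.prod_append, List.map_cons, List.prod_cons,
      List.map_nil, List.prod_nil, mul_one, Algebra.smul_def, map_mul, map_neg, map_ofNat,
      map_one, map_sub, map_add]
    ring

end withmaps2

lemma sum_smul_comb1 {α : Type*} (L : List α) (f : α → ℚ) (g : α → A) (c C : A) :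
    (L.map fun p => f p • (c * g p + C)).sum
      = c * (L.map fun p => f p • g p).sum + ((L.map f).sum) • C := by
  induction L with
  | nil => simp
  | cons a L ih =>
    simp only [List.map_cons, List.sum_cons]
    rw [ih]
    simp only [smul_add, mul_add, add_smul, mul_smul_comm]
    abel

lemma sum_smul_comb2 {α : Type*} (L : List α) (f : α → ℚ) (g h : α → A) (c d C : A) :
    (L.map fun p => f p • (c * g p + d * h p + C)).sum
      = c * (L.map fun p => f p • g p).sum + d * (L.map fun p => f p • h p).sum
        + ((L.map f).sum) • C := by
  induction L with
  | nil => simp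
  | cons a L ih =>
    simp only [List.map_cons, List.sum_cons]
    rw [ih]
    simp only [smul_add, mul_add, add_smul, mul_smul_comm]
    abel

section steps
variable (ω : H →ₗ[ℚ] H →ₗ[ℚ] ℚ) (σ : H →ₗ[ℚ] A) (Y Z : H)

lemma beta_step {β : TensorAlgebra ℚ H →ₗ[ℚ] A} (hβ : IsBeta ω σ Y Z β)
    (x y : H) {t : List H} (ht : 2 ≤ t.length) :
    β (dynkin (x :: y :: t)) = (σ x * σ y) * β (dynkin t) := by
  have htne : t ≠ [] := by intro h; subst h; simp at ht
  conv_lhs => rw [dynkin_cons_cons x y t htne, dexp_sum t, brk_sum, map_list_sum, List.map_map]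
  simp only [Function.comp_def, map_smul]
  set C : A := (2 * ω Y y) • (σ x * (σ Z * symword σ t))
      - (2 * ω Z y) • (σ x * (σ Y * symword σ t)) with hC
  have key : ∀ p ∈ dexp t, β (brk x y (word p.2)) = (σ x * σ y) * β (word p.2) + C := by
    intro p hp
    have hlen : 2 ≤ p.2.length := by rw [(dexp_perm t p hp).length_eq]; exact ht
    rw [beta_brk ω σ Y Z hβ x y hlen, symword_perm σ (dexp_perm t p hp), hC, add_sub_assoc]
  rw [List.map_congr_left (fun p hp => by rw [key p hp])]
  rw [sum_smul_comb1 (dexp t) (fun p => p.1) (fun p => β (word p.2)) (σ x * σ y) C]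
  obtain ⟨a, b, r, rfl⟩ : ∃ a b r, t = a :: b :: r := by
    rcases t with _ | ⟨a, _ | ⟨b, r⟩⟩ <;> simp at ht <;> exact ⟨a, b, r, rfl⟩
  rw [show ((dexp (a :: b :: r)).map fun p => p.1).sum
      = ((dexp (a :: b :: r)).map Prod.fst).sum from rfl, dexp_fst_sum, zero_smul, add_zero,
    ← phi_dynkin β]

lemma gamma_step {β γ : TensorAlgebra ℚ H →ₗ[ℚ] A} (hβ : IsBeta ω σ Y Z β)
    (hγ : IsGamma ω σ Y Z γ) (x y : H) {t : List H} (ht : 3 ≤ t.length) :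
    γ (dynkin (x :: y :: t)) =
      (σ x * σ y) * γ (dynkin t) - (2:ℚ) • ((σ x * σ y) * β (dynkin t)) := by
  have htne : t ≠ [] := by intro h; subst h; simp at ht
  conv_lhs => rw [dynkin_cons_cons x y t htne, dexp_sum t, brk_sum, map_list_sum, List.map_map]
  simp only [Function.comp_def, map_smul]
  set C : A := - ((2 * ω Y y) • (σ x * (σ Z * symword σ t)))
      + (2 * ω Z y) • (σ x * (σ Y * symword σ t)) with hC
  set d : A := -((2:ℚ) • (1 : A)) with hd
  have key : ∀ p ∈ dexp t, γ (brk x y (word p.2)) =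
      (σ x * σ y) * γ (word p.2) + (d * (σ x * σ y)) * β (word p.2) + C := by
    intro p hp
    have hlen : 3 ≤ p.2.length := by rw [(dexp_perm t p hp).length_eq]; exact ht
    rw [gamma_brk ω σ Y Z hβ hγ x y hlen, symword_perm σ (dexp_perm t p hp), hC, hd]
    simp only [Algebra.smul_def, map_mul, map_neg, map_ofNat, map_one, mul_one]
    ring
  rw [List.map_congr_left (fun p hp => by rw [key p hp])]
  rw [sum_smul_comb2 (dexp t) (fun p => p.1) (fun p => γ (word p.2)) (fun p => β (word p.2))
      (σ x * σ y) (d * (σ x * σ y)) C]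
  obtain ⟨a, b, r, rfl⟩ : ∃ a b r, t = a :: b :: r := by
    rcases t with _ | ⟨a, _ | ⟨b, r⟩⟩ <;> simp at ht <;> exact ⟨a, b, r, rfl⟩
  rw [show ((dexp (a :: b :: r)).map fun p => p.1).sum
      = ((dexp (a :: b :: r)).map Prod.fst).sum from rfl, dexp_fst_sum, zero_smul, add_zero,
    ← phi_dynkin β, ← phi_dynkin γ, hd]
  simp only [Algebra.smul_def, map_ofNat, map_one, mul_one]
  ring

end steps

section bases
variable (ω : H →ₗ[ℚ] H →ₗ[ℚ] ℚ) (σ : H →ₗ[ℚ] A) (Y Z : H)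

lemma base3 {β γ : TensorAlgebra ℚ H →ₗ[ℚ] A} (hβ : IsBeta ω σ Y Z β)
    (hγ : IsGamma ω σ Y Z γ) (a b c : H) :
    γ (dynkin [a, b, c]) = ((1:ℚ) - 3) • β (dynkin [a, b, c]) := by
  have e : dynkin [a, b, c]
      = word [a, b, c] - word [b, c, a] - word [a, c, b] + word [c, b, a] := by
    simp [dynkin, word]; noncomm_ring
  have b1 := hβ a c [b]; have b2 := hβ b a [c]; have b3 := hβ a b [c]; have b4 := hβ c a [b]
  have g1 := hγ.1 a b c; have g2 := hγ.1 b c a; have g3 := hγ.1 a c b; have g4 := hγ.1 c b a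
  simp only [List.cons_append, List.nil_append, List.singleton_append] at b1 b2 b3 b4
  rw [e]
  simp only [map_sub, map_add]
  rw [b1, b2, b3, b4, g1, g2, g3, g4]
  simp only [symword, List.map_append, List.prod_append, List.map_cons, List.prod_cons,
    List.map_nil, List.prod_nil, mul_one, Algebra.smul_def, map_mul, map_neg, map_ofNat,
    map_one, map_sub, map_add]
  ring

lemma base4 {β γ : TensorAlgebra ℚ H →ₗ[ℚ] A} (hβ : IsBeta ω σ Y Z β)
    (hγ : IsGamma ω σ Y Z γ) (a b c d : H) :
    γ (dynkin [a, b, c, d]) = ((1:ℚ) - 4) • β (dynkin [a, b, c, d]) := by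
  have e : dynkin [a, b, c, d]
      = word [a, b, c, d] - word [b, c, d, a] - word [a, c, d, b] + word [c, d, b, a]
        - word [a, b, d, c] + word [b, d, c, a] + word [a, d, c, b] - word [d, c, b, a] := by
    simp [dynkin, word]; noncomm_ring
  have b1 := hβ a d [b, c]; have b2 := hβ b a [c, d]; have b3 := hβ a b [c, d]
  have b4 := hβ c a [d, b]; have b5 := hβ a c [b, d]; have b6 := hβ b a [d, c]
  have b7 := hβ a b [d, c]; have b8 := hβ d a [c, b]
  have g1 := hγ.2 a b [] c d; have g2 := hγ.2 b c [] d a; have g3 := hγ.2 a c [] d b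
  have g4 := hγ.2 c d [] b a; have g5 := hγ.2 a b [] d c; have g6 := hγ.2 b d [] c a
  have g7 := hγ.2 a d [] c b; have g8 := hγ.2 d c [] b a
  simp only [List.cons_append, List.nil_append, List.singleton_append]
    at b1 b2 b3 b4 b5 b6 b7 b8 g1 g2 g3 g4 g5 g6 g7 g8
  rw [e]
  simp only [map_sub, map_add]
  rw [b1, b2, b3, b4, b5, b6, b7, b8, g1, g2, g3, g4, g5, g6, g7, g8]
  simp only [symword, List.map_append, List.prod_append, List.map_cons, List.prod_cons,
    List.map_nil, List.prod_nil, mul_one, Algebra.smul_def, map_mul, map_neg, map_ofNat,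
    map_one, map_sub, map_add]
  ring

lemma main_aux {β γ : TensorAlgebra ℚ H →ₗ[ℚ] A} (hβ : IsBeta ω σ Y Z β)
    (hγ : IsGamma ω σ Y Z γ) :
    ∀ (n : ℕ) (l : List H), l.length = n → 3 ≤ n →
      γ (dynkin l) = ((1:ℚ) - n) • β (dynkin l) := by
  intro n
  induction n using Nat.strong_induction_on with
  | _ n ih =>
    intro l hlen h3
    rcases l with _ | ⟨a, _ | ⟨b, _ | ⟨c, _ | ⟨d, _ | ⟨e, r⟩⟩⟩⟩⟩
    · simp at hlen; omega
    · simp at hlen; omega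
    · simp at hlen; omega
    · obtain rfl : n = 3 := by simp at hlen; omega
      simpa using base3 ω σ Y Z hβ hγ a b c
    · obtain rfl : n = 4 := by simp at hlen; omega
      simpa using base4 ω σ Y Z hβ hγ a b c d
    · have hlt : 3 ≤ (c :: d :: e :: r).length := by simp
      have h2 : 2 ≤ (c :: d :: e :: r).length := by simp
      have hm : (c :: d :: e :: r).length < n := by simp at hlen ⊢; omega
      rw [gamma_step ω σ Y Z hβ hγ a b hlt, beta_step ω σ Y Z hβ a b h2,
          ih (c :: d :: e :: r).length hm (c :: d :: e :: r) rfl (by simp),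
          mul_smul_comm]
      rw [show ((2:ℚ) • (σ a * σ b * β (dynkin (c :: d :: e :: r))))
          = (2:ℚ) • (σ a * σ b * β (dynkin (c :: d :: e :: r))) from rfl, ← sub_smul]
      congr 1
      have hn5 : n = r.length + 5 := by simp at hlen; omega
      have hn : (n:ℚ) = ((c :: d :: e :: r).length : ℚ) + 2 := by
        subst hn5; simp; push_cast; ring
      rw [hn]; ring

end bases



/-- Theorem (Kawazumi–Kuno): if `m ≥ 3`, then
`α(Φ(X1 X2 ⋯ Xm)) = −m·β(Φ(X1 X2 ⋯ Xm))` in `Sym^m(H)`, where `α := −β + γ`.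
This is the key identity from which it is deduced that the composite of Schedler's
cobracket with the symmetrization map `𝔰` recovers `(−1)^m·m` times the Morita
trace `Tr_{m+1}`. -/
theorem stmt11 (ω : H →ₗ[ℚ] H →ₗ[ℚ] ℚ) (hω : ∀ x, ω x x = 0)
    (σ : H →ₗ[ℚ] A) (Y Z : H)
    (β : TensorAlgebra ℚ H →ₗ[ℚ] A) (hβ : IsBeta ω σ Y Z β)
    (γ : TensorAlgebra ℚ H →ₗ[ℚ] A) (hγ : IsGamma ω σ Y Z γ)
    (l : List H) (hl : 3 ≤ l.length) :
    -β (dynkin l) + γ (dynkin l) = (-(l.length : ℚ)) • β (dynkin l) := by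
  rw [main_aux ω σ Y Z hβ hγ l.length l rfl hl,
      show -β (dynkin l) = (-1 : ℚ) • β (dynkin l) from (neg_one_smul ℚ _).symm, ← add_smul]
  congr 1
  ring

end
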